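/- Let d, n, T ≥ 1, let K ⊆ [0,1]^d be convex, let u ∈ K, and set α = (1 − ‖u‖_∞)/4. For each t ∈ {1,…,T} and j ∈ {1,…,n}, let f_t^j : ℝ^d → ℝ be continuous DR-submodular and nonnegative on X = [0,1]^d, differentiable on X with continuous gradient satisfying ‖∇f_t^j(x) − ∇f_t^j(y)‖ ≤ β‖x − y‖ for all x, y ∈ X, let x̂_t^j ∈ K, set x_t^j = (x̂_t^j + u)/2, and define g_t^j(x) = ∫_0^1 (1/(8(1 − z/2)^3)) · ∇f_t^j((z/2)(x − u) + u) dz. Then for every i ∈ {1,…,n} and every x ∈ K: α·Σ_{t=1}^T Σ_{j=1}^n f_t^j(x) − Σ_{t=1}^T Σ_{j=1}^n f_t^j(x_t^i) ≤ Σ_{t=1}^T Σ_{j=1}^n ⟨g_t^j(x̂_t^j), x − x̂_t^i⟩ + Σ_{t=1}^T Σ_{j=1}^n ⟨(1/2)·∇f_t^j(x_t^j) − g_t^j(x̂_t^j), x̂_t^j − x̂_t^i⟩ + (β/8)·Σ_{t=1}^T Σ_{j=1}^n ‖x̂_t^i − x̂_t^j‖². -/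

import Mathlib

/-!
A DR-submodular function with a gradient on the cube has a coordinatewise antitone gradient, hence
is concave along nonnegative directions. Comparing `p` with `p ⊔ x` and `p ⊓ x` then gives
`⟪∇f p, x - p⟫ ≥ f (p ⊔ x) + f (p ⊓ x) - 2 f p ≥ (1 - ‖p‖∞) f x - 2 f p`.
On the path `p z = u + (z / 2) • (x̂ - u)` one has `‖p z‖∞ ≤ 1 - (1 - z / 2) (1 - ν)`, and after
multiplication by the weight `1 / (8 (1 - z / 2)³)` this lower bound is the derivative of
`(1 - ν) f x / (4 (1 - z / 2)) - f (p z) / (4 (1 - z / 2)²)`. Integrating over `[0, 1]` yields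
`α f x - f ((x̂ + u) / 2) ≤ ⟪g x̂, x - x̂⟫`. The β-Lipschitz gradient bounds `f x_t^j - f x_t^i` by a
first-order term plus `β / 8 ‖x̂_t^i - x̂_t^j‖²`; summing over `t` and `j` gives the theorem.
-/

open MeasureTheory Finset

noncomputable section

/-- The unit cube `[0,1]^d` in `ℝ^d` (with Euclidean structure). -/
def cube (d : ℕ) : Set (EuclideanSpace ℝ (Fin d)) :=
  {x | ∀ i, x i ∈ Set.Icc (0 : ℝ) 1}

/-- `f` is continuous DR-submodular on the unit cube `[0,1]^d`: for coordinatewise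
comparable points `x ≤ y` in the cube and any feasible move of size `z ≥ 0` along a
coordinate direction, the gain at `x` dominates the gain at `y`. -/
def DRSubmodularOn (d : ℕ) (f : EuclideanSpace ℝ (Fin d) → ℝ) : Prop :=
  ∀ x y : EuclideanSpace ℝ (Fin d), x ∈ cube d → y ∈ cube d → (∀ i, x i ≤ y i) →
    ∀ (j : Fin d) (z : ℝ), 0 ≤ z →
      x + z • EuclideanSpace.single j (1 : ℝ) ∈ cube d →
      y + z • EuclideanSpace.single j (1 : ℝ) ∈ cube d →
      f (y + z • EuclideanSpace.single j (1 : ℝ)) - f y ≤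
        f (x + z • EuclideanSpace.single j (1 : ℝ)) - f x

open Set Topology
open scoped RealInnerProductSpace

theorem HasGradientWithinAt.hasDerivWithinAt_add_smul {F : Type*} [NormedAddCommGroup F]
    [InnerProductSpace ℝ F] [CompleteSpace F] {f : F → ℝ} {g a v : F} {S : Set F} {s : Set ℝ}
    {t : ℝ} (hf : HasGradientWithinAt f g S (a + t • v)) (hs : MapsTo (fun t ↦ a + t • v) s S) :
    HasDerivWithinAt (fun t ↦ f (a + t • v)) ⟪g, v⟫ s t := by
  have hline : HasDerivWithinAt (fun t : ℝ ↦ a + t • v) v s t := by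
    simpa using ((hasDerivWithinAt_id t s).smul_const v).const_add a
  exact hf.hasFDerivWithinAt.comp_hasDerivWithinAt t hline hs

theorem HasDerivWithinAt.le_of_mul_sub_le {φ ψ : ℝ → ℝ} {a b x : ℝ} {s : Set ℝ}
    (hφ : HasDerivWithinAt φ a s x) (hψ : HasDerivWithinAt ψ b s x) [(𝓝[s \ {x}] x).NeBot]
    (h : ∀ y ∈ s, (y - x) * (ψ y - ψ x) ≤ (y - x) * (φ y - φ x)) : b ≤ a := by
  refine le_of_tendsto_of_tendsto (hasDerivWithinAt_iff_tendsto_slope.1 hψ)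
    (hasDerivWithinAt_iff_tendsto_slope.1 hφ) ?_
  filter_upwards [self_mem_nhdsWithin] with y ⟨hys, hyx⟩
  have hsq : 0 < (y - x) ^ 2 := by
    have : y - x ≠ 0 := sub_ne_zero.2 hyx
    positivity
  have hslope : ∀ χ : ℝ → ℝ, slope χ x y = (y - x) * (χ y - χ x) / (y - x) ^ 2 := fun χ ↦ by
    rw [slope_def_field]
    field_simp [sub_ne_zero.2 hyx]
  rw [hslope, hslope]
  exact div_le_div_of_nonneg_right (h y hys) hsq.le

theorem nhdsWithin_Icc_diff_singleton_neBot {a b x : ℝ} (hab : a < b) (hx : x ∈ Icc a b) :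
    (𝓝[Icc a b \ {x}] x).NeBot := by
  rcases hx.2.lt_or_eq with hxb | rfl
  · exact (left_nhdsWithin_Ioo_neBot hxb).mono <| nhdsWithin_mono _ fun y hy ↦
      ⟨⟨hx.1.trans hy.1.le, hy.2.le⟩, hy.1.ne'⟩
  · exact (right_nhdsWithin_Ioo_neBot hab).mono <| nhdsWithin_mono _ fun y hy ↦
      ⟨⟨hy.1.le, hy.2.le⟩, hy.2.ne⟩

theorem Convex.add_inner_gradient_sub_le {F : Type*} [NormedAddCommGroup F]
    [InnerProductSpace ℝ F] [CompleteSpace F] {S : Set F} (hS : Convex ℝ S) {f : F → ℝ}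
    {f' : F → F} {β : ℝ} (hgrad : ∀ x ∈ S, HasGradientWithinAt f (f' x) S x)
    (hlip : ∀ x ∈ S, ∀ y ∈ S, ‖f' x - f' y‖ ≤ β * ‖x - y‖) {a b : F} (ha : a ∈ S) (hb : b ∈ S) :
    f a + ⟪f' a, b - a⟫ - β / 2 * ‖b - a‖ ^ 2 ≤ f b := by
  set v := b - a
  have hmaps : MapsTo (fun t ↦ a + t • v) (Icc (0 : ℝ) 1) S :=
    fun _ ht ↦ hS.add_smul_sub_mem ha hb ht
  have hderiv : ∀ t ∈ Icc (0 : ℝ) 1, HasDerivWithinAt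
      (fun t ↦ f (a + t • v) - t * ⟪f' a, v⟫ + β / 2 * t ^ 2 * ‖v‖ ^ 2)
      (⟪f' (a + t • v), v⟫ - ⟪f' a, v⟫ + β * t * ‖v‖ ^ 2) (Icc 0 1) t := fun t ht ↦ by
    refine ((((hgrad _ (hmaps ht)).hasDerivWithinAt_add_smul hmaps).sub
      (hasDerivAt_mul_const _).hasDerivWithinAt).add
      (((hasDerivAt_pow 2 t).const_mul (β / 2)).mul_const (‖v‖ ^ 2)).hasDerivWithinAt).congr_deriv
      ?_
    push_cast
    ring
  have hderiv_nonneg : ∀ t ∈ Icc (0 : ℝ) 1,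
      0 ≤ ⟪f' (a + t • v), v⟫ - ⟪f' a, v⟫ + β * t * ‖v‖ ^ 2 := fun t ht ↦ by
    have hnorm : ‖f' (a + t • v) - f' a‖ ≤ β * (t * ‖v‖) := by
      simpa [norm_smul, abs_of_nonneg ht.1] using hlip _ (hmaps ht) a ha
    have hcs := abs_real_inner_le_norm (f' (a + t • v) - f' a) v
    rw [inner_sub_left] at hcs
    nlinarith [abs_le.1 hcs, mul_le_mul_of_nonneg_right hnorm (norm_nonneg v)]
  have hmono := monotoneOn_of_hasDerivWithinAt_nonneg (convex_Icc 0 1)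
    (fun t ht ↦ (hderiv t ht).continuousWithinAt)
    (fun t ht ↦ (hderiv t (interior_subset ht)).mono interior_subset)
    (fun t ht ↦ hderiv_nonneg t (interior_subset ht))
    (left_mem_Icc.2 zero_le_one) (right_mem_Icc.2 zero_le_one) zero_le_one
  simp only [zero_smul, add_zero, zero_mul, sub_zero, one_smul, one_mul, v, add_sub_cancel] at hmono
  linarith

theorem hasDerivAt_boostingPotential {φ : ℝ → ℝ} {φ' A z : ℝ} (hφ : HasDerivAt φ φ' z)
    (hz : z ≠ 2) :
    HasDerivAt (fun z ↦ A / (4 * (1 - z / 2)) - φ z / (4 * (1 - z / 2) ^ 2))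
      (A / (8 * (1 - z / 2) ^ 2) - φ z / (4 * (1 - z / 2) ^ 3) - φ' / (4 * (1 - z / 2) ^ 2))
      z := by
  have hc : 1 - z / 2 ≠ 0 := fun h ↦ hz (by linarith)
  have hlin : HasDerivAt (fun z : ℝ ↦ 4 * (1 - z / 2)) (-2) z :=
    ((((hasDerivAt_id z).div_const 2).const_sub 1).const_mul 4).congr_deriv (by norm_num)
  have hsq : HasDerivAt (fun z : ℝ ↦ 4 * (1 - z / 2) ^ 2) (-4 * (1 - z / 2)) z :=
    (((((hasDerivAt_id z).div_const 2).const_sub 1).pow 2).const_mul 4).congr_deriv (by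
      simp only [id_eq]
      push_cast
      ring)
  refine ((hasDerivAt_const z A).div hlin (by simpa using hc)).sub
    (hφ.div hsq (by simpa using hc)) |>.congr_deriv ?_
  field_simp
  ring

theorem sub_le_integral_of_boostingPotential {φ φ' ψ : ℝ → ℝ} {A : ℝ}
    (hφ : ∀ z ∈ Icc (0 : ℝ) 1, HasDerivWithinAt φ (φ' z) (Icc 0 1) z)
    (hψ : IntegrableOn ψ (Icc 0 1))
    (hle : ∀ z ∈ Ioo (0 : ℝ) 1, A / (8 * (1 - z / 2) ^ 2) - φ z / (4 * (1 - z / 2) ^ 3) -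
      φ' z / (4 * (1 - z / 2) ^ 2) ≤ ψ z) :
    A / 4 - φ 1 + φ 0 / 4 ≤ ∫ z in (0 : ℝ)..1, ψ z := by
  have hc : ∀ z ∈ Icc (0 : ℝ) 1, 0 < 1 - z / 2 := fun z hz ↦ by linarith [hz.2]
  have h := intervalIntegral.sub_le_integral_of_hasDeriv_right_of_le zero_le_one
    (g := fun z ↦ A / (4 * (1 - z / 2)) - φ z / (4 * (1 - z / 2) ^ 2))
    ((continuousOn_const.div (by fun_prop) fun z hz ↦ (by have := hc z hz; positivity)).sub
      (ContinuousOn.div (fun z hz ↦ (hφ z hz).continuousWithinAt) (by fun_prop)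
        fun z hz ↦ (by have := hc z hz; positivity)))
    (fun z hz ↦ (hasDerivAt_boostingPotential ((hφ z (Ioo_subset_Icc_self hz)).hasDerivAt
      (Icc_mem_nhds hz.1 hz.2)) (by linarith [hz.2])).hasDerivWithinAt)
    hψ hle
  norm_num at h
  linarith

-- the paper's surrogate gradient `g(x)` built from the anchor `u`
def boostedGradient {F : Type*} [NormedAddCommGroup F] [NormedSpace ℝ F] (f' : F → F)
    (u x : F) : F :=
  ∫ z in (0 : ℝ)..1, (1 / (8 * (1 - z / 2) ^ 3)) • f' ((z / 2) • (x - u) + u)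

theorem inner_boostedGradient {F : Type*} [NormedAddCommGroup F] [InnerProductSpace ℝ F]
    [CompleteSpace F] {f' : F → F} {u x : F}
    (h : IntervalIntegrable (fun z : ℝ ↦ (1 / (8 * (1 - z / 2) ^ 3)) • f' ((z / 2) • (x - u) + u))
      volume 0 1) (v : F) :
    ⟪boostedGradient f' u x, v⟫ =
      ∫ z in (0 : ℝ)..1, 1 / (8 * (1 - z / 2) ^ 3) * ⟪f' ((z / 2) • (x - u) + u), v⟫ := by
  rw [real_inner_comm, boostedGradient, ← innerSL_apply_apply ℝ,
    ← ContinuousLinearMap.intervalIntegral_comp_comm _ h]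
  simp only [innerSL_apply_apply, real_inner_smul_right, real_inner_comm]

section Cube

variable {d : ℕ}

local notation "E" => EuclideanSpace ℝ (Fin d)

variable {f : EuclideanSpace ℝ (Fin d) → ℝ}
  {f' : EuclideanSpace ℝ (Fin d) → EuclideanSpace ℝ (Fin d)}

theorem convex_cube : Convex ℝ (cube d) := by
  intro x hx y hy a b ha hb hab i
  have hxi := hx i
  have hyi := hy i
  simp only [PiLp.add_apply, PiLp.smul_apply, smul_eq_mul]
  constructor <;> nlinarith [hxi.1, hxi.2, hyi.1, hyi.2]

theorem add_smul_single_apply (x : E) (z : ℝ) (j i : Fin d) :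
    (x + z • EuclideanSpace.single j (1 : ℝ)) i = x i + if i = j then z else 0 := by
  split_ifs with h <;> simp [h]

theorem add_smul_single_mem_cube {x : E} (hx : x ∈ cube d) {j : Fin d} {z : ℝ}
    (hz : x j + z ∈ Icc (0 : ℝ) 1) : x + z • EuclideanSpace.single j (1 : ℝ) ∈ cube d := by
  intro i
  rw [add_smul_single_apply]
  split_ifs with h
  · exact h ▸ hz
  · simpa using hx i

theorem mapsTo_add_smul_Icc_cube {a v : E} (ha : a ∈ cube d) (hav : a + v ∈ cube d) :
    MapsTo (fun t ↦ a + t • v) (Icc (0 : ℝ) 1) (cube d) :=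
  fun _ ht ↦ convex_cube.add_smul_mem ha hav ht

theorem DRSubmodularOn.mul_sub_le (hf : DRSubmodularOn d f) {x y : E}
    (hx : x ∈ cube d) (hy : y ∈ cube d) (hxy : ∀ i, x i ≤ y i) (j : Fin d) (z : ℝ)
    (hxz : x + z • EuclideanSpace.single j (1 : ℝ) ∈ cube d)
    (hyz : y + z • EuclideanSpace.single j (1 : ℝ) ∈ cube d) :
    z * (f (y + z • EuclideanSpace.single j (1 : ℝ)) - f y) ≤
      z * (f (x + z • EuclideanSpace.single j (1 : ℝ)) - f x) := by
  rcases le_total 0 z with hz | hz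
  · exact mul_le_mul_of_nonneg_left (hf x y hx hy hxy j z hz hxz hyz) hz
  · -- a backward step is a forward step of size `-z` from the shifted points
    have hback : ∀ w : E, w + z • EuclideanSpace.single j (1 : ℝ) +
        (-z) • EuclideanSpace.single j (1 : ℝ) = w := fun w ↦ by module
    have hshift : ∀ i, (x + z • EuclideanSpace.single j (1 : ℝ)) i ≤
        (y + z • EuclideanSpace.single j (1 : ℝ)) i := fun i ↦ by
      simpa [add_smul_single_apply] using hxy i
    have h := hf _ _ hxz hyz hshift j (-z) (neg_nonneg.2 hz) (by rwa [hback])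
      (by rwa [hback])
    rw [hback, hback] at h
    nlinarith

theorem DRSubmodularOn.gradient_apply_le_of_sub_lt_one (hf : DRSubmodularOn d f)
    (hgrad : ∀ x ∈ cube d, HasGradientWithinAt f (f' x) (cube d) x) {x y : E}
    (hx : x ∈ cube d) (hy : y ∈ cube d) (hxy : ∀ i, x i ≤ y i) {j : Fin d}
    (hj : y j - x j < 1) : f' y j ≤ f' x j := by
  set e : E := EuclideanSpace.single j (1 : ℝ)
  set s : Set ℝ := Icc (-x j) (1 - y j)
  have hmaps : ∀ w ∈ cube d, (∀ z ∈ s, w j + z ∈ Icc (0 : ℝ) 1) →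
      MapsTo (fun z ↦ w + z • e) s (cube d) :=
    fun w hw hws z hz ↦ add_smul_single_mem_cube hw (hws z hz)
  have hxs := hmaps x hx fun z hz ↦ ⟨by linarith [hz.1], by linarith [hz.2, hxy j]⟩
  have hys := hmaps y hy fun z hz ↦ ⟨by linarith [hz.1, hxy j], by linarith [hz.2]⟩
  have : (𝓝[s \ {0}] 0).NeBot := nhdsWithin_Icc_diff_singleton_neBot (by linarith)
    ⟨by linarith [(hx j).1], by linarith [(hy j).2]⟩
  have hderiv : ∀ w ∈ cube d, MapsTo (fun z ↦ w + z • e) s (cube d) →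
      HasDerivWithinAt (fun z ↦ f (w + z • e)) (f' w j) s 0 := fun w hw hws ↦ by
    simpa [e, EuclideanSpace.inner_single_right] using
      (hgrad (w + (0 : ℝ) • e) (by simpa using hw)).hasDerivWithinAt_add_smul hws
  refine (hderiv x hx hxs).le_of_mul_sub_le (hderiv y hy hys) fun z hz ↦ ?_
  simpa using hf.mul_sub_le hx hy hxy j z (hxs hz) (hys hz)

theorem DRSubmodularOn.gradient_apply_antitone (hf : DRSubmodularOn d f)
    (hgrad : ∀ x ∈ cube d, HasGradientWithinAt f (f' x) (cube d) x) {x y : E}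
    (hx : x ∈ cube d) (hy : y ∈ cube d) (hxy : ∀ i, x i ≤ y i) (j : Fin d) :
    f' y j ≤ f' x j := by
  -- the midpoint halves the gap `y j - x j ≤ 1` on both sides
  set m : E := (2⁻¹ : ℝ) • x + (2⁻¹ : ℝ) • y
  have hm : m ∈ cube d := convex_cube hx hy (by norm_num) (by norm_num) (by norm_num)
  have hm_apply : ∀ i, m i = 2⁻¹ * x i + 2⁻¹ * y i := fun i ↦ by simp [m]
  have hxm : ∀ i, x i ≤ m i := fun i ↦ by rw [hm_apply]; linarith [hxy i]
  have hmy : ∀ i, m i ≤ y i := fun i ↦ by rw [hm_apply]; linarith [hxy i]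
  have hgap : y j - x j ≤ 1 := by linarith [(hy j).2, (hx j).1]
  exact (hf.gradient_apply_le_of_sub_lt_one hgrad hm hy hmy (by rw [hm_apply]; linarith)).trans
    (hf.gradient_apply_le_of_sub_lt_one hgrad hx hm hxm (by rw [hm_apply]; linarith))

theorem DRSubmodularOn.inner_gradient_antitone (hf : DRSubmodularOn d f)
    (hgrad : ∀ x ∈ cube d, HasGradientWithinAt f (f' x) (cube d) x) {x y v : E}
    (hx : x ∈ cube d) (hy : y ∈ cube d) (hxy : ∀ i, x i ≤ y i) (hv : ∀ i, 0 ≤ v i) :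
    ⟪f' y, v⟫ ≤ ⟪f' x, v⟫ := by
  simp only [PiLp.inner_apply, RCLike.inner_apply, conj_trivial]
  exact Finset.sum_le_sum fun i _ ↦
    mul_le_mul_of_nonneg_left (hf.gradient_apply_antitone hgrad hx hy hxy i) (hv i)

theorem DRSubmodularOn.concaveOn_add_smul (hf : DRSubmodularOn d f)
    (hgrad : ∀ x ∈ cube d, HasGradientWithinAt f (f' x) (cube d) x) {a v : E}
    (hv : ∀ i, 0 ≤ v i) {s : Set ℝ} (hs : Convex ℝ s)
    (hmaps : MapsTo (fun t ↦ a + t • v) s (cube d)) :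
    ConcaveOn ℝ s (fun t ↦ f (a + t • v)) := by
  have hderiv : ∀ t ∈ s, HasDerivWithinAt (fun t ↦ f (a + t • v)) ⟪f' (a + t • v), v⟫ s t :=
    fun t ht ↦ (hgrad _ (hmaps ht)).hasDerivWithinAt_add_smul hmaps
  have hderiv_int : ∀ t ∈ interior s, HasDerivAt (fun t ↦ f (a + t • v)) ⟪f' (a + t • v), v⟫ t :=
    fun t ht ↦ (hderiv t (interior_subset ht)).hasDerivAt (mem_interior_iff_mem_nhds.1 ht)
  refine AntitoneOn.concaveOn_of_deriv hs (fun t ht ↦ (hderiv t ht).continuousWithinAt)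
    (fun t ht ↦ (hderiv_int t ht).differentiableAt.differentiableWithinAt) ?_
  intro t₁ ht₁ t₂ ht₂ ht
  rw [(hderiv_int t₁ ht₁).deriv, (hderiv_int t₂ ht₂).deriv]
  refine hf.inner_gradient_antitone hgrad (hmaps (interior_subset ht₁))
    (hmaps (interior_subset ht₂)) (fun i ↦ ?_) hv
  simpa using mul_le_mul_of_nonneg_right ht (hv i)

theorem DRSubmodularOn.sub_le_inner_gradient (hf : DRSubmodularOn d f)
    (hgrad : ∀ x ∈ cube d, HasGradientWithinAt f (f' x) (cube d) x) {a v : E}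
    (ha : a ∈ cube d) (hav : a + v ∈ cube d) (hv : ∀ i, 0 ≤ v i) :
    f (a + v) - f a ≤ ⟪f' a, v⟫ := by
  have hmaps := mapsTo_add_smul_Icc_cube ha hav
  have hconc := hf.concaveOn_add_smul hgrad hv (convex_Icc 0 1) hmaps
  have h := hconc.slope_le_of_hasDerivWithinAt (x := 0) (y := 1) (by simp) (by simp) one_pos
    ((hgrad (a + (0 : ℝ) • v) (by simpa using ha)).hasDerivWithinAt_add_smul hmaps)
  simpa [slope_def_field] using h

theorem DRSubmodularOn.inner_gradient_le_sub (hf : DRSubmodularOn d f)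
    (hgrad : ∀ x ∈ cube d, HasGradientWithinAt f (f' x) (cube d) x) {a v : E}
    (ha : a ∈ cube d) (hav : a + v ∈ cube d) (hv : ∀ i, 0 ≤ v i) :
    ⟪f' (a + v), v⟫ ≤ f (a + v) - f a := by
  have hmaps := mapsTo_add_smul_Icc_cube ha hav
  have hconc := hf.concaveOn_add_smul hgrad hv (convex_Icc 0 1) hmaps
  have h := hconc.le_slope_of_hasDerivWithinAt (x := 0) (y := 1) (by simp) (by simp) one_pos
    ((hgrad (a + (1 : ℝ) • v) (by simpa using hav)).hasDerivWithinAt_add_smul hmaps)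
  simpa [slope_def_field] using h

theorem DRSubmodularOn.one_sub_mul_le (hf : DRSubmodularOn d f)
    (hgrad : ∀ x ∈ cube d, HasGradientWithinAt f (f' x) (cube d) x)
    (hnonneg : ∀ x ∈ cube d, 0 ≤ f x) {b s : E} (hb : b ∈ cube d) {M : ℝ} (hM0 : 0 < M)
    (hM1 : M ≤ 1) (hbs : ∀ i, b i ≤ s i) (hsM : ∀ i, s i - b i ≤ M * (1 - b i)) :
    (1 - M) * f b ≤ f s := by
  set v := s - b
  have hv : ∀ i, 0 ≤ v i := fun i ↦ by simpa [v] using hbs i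
  have hmaps : MapsTo (fun t ↦ b + t • v) (Icc 0 M⁻¹) (cube d) := by
    intro t ht i
    have hvi : t * v i ≤ 1 - b i := by
      calc t * v i ≤ M⁻¹ * (M * (1 - b i)) :=
            mul_le_mul ht.2 (by simpa [v] using hsM i) (hv i) (by positivity)
        _ = 1 - b i := by field_simp
    simp only [PiLp.add_apply, PiLp.smul_apply, smul_eq_mul]
    exact ⟨by nlinarith [(hb i).1, ht.1, hv i], by linarith⟩
  -- concavity between `t = 0` and `t = M⁻¹`, evaluated at `1 = (1 - M) • 0 + M • M⁻¹`
  have hconc := (hf.concaveOn_add_smul hgrad hv (convex_Icc 0 M⁻¹) hmaps).2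
    (left_mem_Icc.2 (by positivity)) (right_mem_Icc.2 (by positivity))
    (sub_nonneg.2 hM1) hM0.le (sub_add_cancel 1 M)
  have hend := hnonneg _ (hmaps (right_mem_Icc.2 (inv_nonneg.2 hM0.le)))
  simp only [smul_eq_mul, mul_zero, zero_smul, add_zero, zero_add, mul_inv_cancel₀ hM0.ne',
    one_smul] at hconc
  have hs : b + v = s := add_sub_cancel b s
  rw [hs] at hconc
  nlinarith

theorem DRSubmodularOn.one_sub_mul_sub_two_mul_le_inner (hf : DRSubmodularOn d f)
    (hgrad : ∀ x ∈ cube d, HasGradientWithinAt f (f' x) (cube d) x)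
    (hnonneg : ∀ x ∈ cube d, 0 ≤ f x) {p x : E} (hp : p ∈ cube d) (hx : x ∈ cube d) {M : ℝ}
    (hM0 : 0 < M) (hM1 : M ≤ 1) (hpM : ∀ i, p i ≤ M) :
    (1 - M) * f x - 2 * f p ≤ ⟪f' p, x - p⟫ := by
  set s : E := WithLp.toLp 2 fun i ↦ max (p i) (x i)
  set m : E := WithLp.toLp 2 fun i ↦ min (p i) (x i)
  have hs : s ∈ cube d := fun i ↦ ⟨le_max_of_le_left (hp i).1, max_le (hp i).2 (hx i).2⟩
  have hm : m ∈ cube d := fun i ↦ ⟨le_min (hp i).1 (hx i).1, min_le_of_left_le (hp i).2⟩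
  have hsup : f s - f p ≤ ⟪f' p, s - p⟫ := by
    simpa using hf.sub_le_inner_gradient hgrad hp (v := s - p) (by simpa using hs)
      fun i ↦ by simp [s]
  have hinf : ⟪f' p, p - m⟫ ≤ f p - f m := by
    simpa using hf.inner_gradient_le_sub hgrad hm (v := p - m) (by simpa using hp)
      fun i ↦ by simp [m]
  have hsx : (1 - M) * f x ≤ f s :=
    hf.one_sub_mul_le hgrad hnonneg hx hM0 hM1 (fun i ↦ le_max_right _ _) fun i ↦ by
      simp only [s]
      rw [sub_le_iff_le_add, max_le_iff]
      constructor <;> nlinarith [(hx i).1, (hx i).2, hpM i]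
  have hdecomp : x - p = (s - p) - (p - m) := by
    ext i
    simp only [PiLp.sub_apply, s, m]
    linarith [max_add_min (p i) (x i)]
  rw [hdecomp, inner_sub_right]
  linarith [hnonneg m hm]

theorem DRSubmodularOn.le_inner_gradient_boostingPath (hf : DRSubmodularOn d f)
    (hgrad : ∀ x ∈ cube d, HasGradientWithinAt f (f' x) (cube d) x)
    (hnonneg : ∀ x ∈ cube d, 0 ≤ f x) {u w x : E} (hu : u ∈ cube d)
    (huw : u + (2 : ℝ) • w ∈ cube d) (hx : x ∈ cube d) {ν : ℝ} (hν0 : 0 ≤ ν) (hν1 : ν ≤ 1)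
    (huν : ∀ i, u i ≤ ν) {z : ℝ} (hz : z ∈ Ioo (0 : ℝ) 1) :
    (1 - ν) * f x / (8 * (1 - z / 2) ^ 2) - f (u + z • w) / (4 * (1 - z / 2) ^ 3) -
        ⟪f' (u + z • w), w⟫ / (4 * (1 - z / 2) ^ 2) ≤
      1 / (8 * (1 - z / 2) ^ 3) * ⟪f' (u + z • w), x - (u + (2 : ℝ) • w)⟫ := by
  have hc : 0 < 1 - z / 2 := by linarith [hz.2]
  have hp : u + z • w = u + (z / 2) • ((2 : ℝ) • w) := by module
  have hpc : u + z • w ∈ cube d := by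
    rw [hp]; exact convex_cube.add_smul_mem hu huw ⟨by linarith [hz.1], by linarith [hz.2]⟩
  -- `u + z • w = (1 - z / 2) • u + (z / 2) • (u + 2 • w)` has coordinates at most
  -- `(1 - z / 2) * ν + z / 2 = 1 - (1 - z / 2) * (1 - ν)`
  have hbound := hf.one_sub_mul_sub_two_mul_le_inner hgrad hnonneg hpc hx
    (M := 1 - (1 - z / 2) * (1 - ν))
    (by nlinarith [mul_le_mul_of_nonneg_left (by linarith : 1 - ν ≤ 1) hc.le, hz.1])
    (by nlinarith [hz.2])
    fun i ↦ by
      have hi := huw i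
      simp only [PiLp.add_apply, PiLp.smul_apply, smul_eq_mul] at hi ⊢
      nlinarith [huν i, hi.2, hz.1, hz.2]
  have hdecomp : x - (u + (2 : ℝ) • w) = (x - (u + z • w)) - (2 - z) • w := by module
  rw [hdecomp, inner_sub_right, real_inner_smul_right]
  calc _ = 1 / (8 * (1 - z / 2) ^ 3) * ((1 - (1 - (1 - z / 2) * (1 - ν))) * f x -
        2 * f (u + z • w) - (2 - z) * ⟪f' (u + z • w), w⟫) := by
        field_simp
        ring
    _ ≤ _ := mul_le_mul_of_nonneg_left (by linarith) (by positivity)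

theorem DRSubmodularOn.sub_le_inner_boostedGradient (hf : DRSubmodularOn d f)
    (hgrad : ∀ x ∈ cube d, HasGradientWithinAt f (f' x) (cube d) x)
    (hcont : ContinuousOn f' (cube d)) (hnonneg : ∀ x ∈ cube d, 0 ≤ f x) {u xh x : E}
    (hu : u ∈ cube d) (hxh : xh ∈ cube d) (hx : x ∈ cube d) {ν : ℝ} (hν0 : 0 ≤ ν) (hν1 : ν ≤ 1)
    (huν : ∀ i, u i ≤ ν) :
    (1 - ν) / 4 * f x - f ((2 : ℝ)⁻¹ • (xh + u)) ≤ ⟪boostedGradient f' u xh, x - xh⟫ := by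
  obtain ⟨w, rfl⟩ : ∃ w : E, xh = u + (2 : ℝ) • w := ⟨(2 : ℝ)⁻¹ • (xh - u), by module⟩
  have hpath : ∀ z : ℝ, (z / 2) • (u + (2 : ℝ) • w - u) + u = u + z • w := fun z ↦ by module
  have hmid : (2 : ℝ)⁻¹ • (u + (2 : ℝ) • w + u) = u + w := by module
  have hmaps : MapsTo (fun z ↦ u + z • w) (Icc (0 : ℝ) 1) (cube d) :=
    mapsTo_add_smul_Icc_cube hu <| by
      rw [← hmid, smul_add]
      exact convex_cube hxh hu (by norm_num) (by norm_num) (by norm_num)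
  have hweight : ContinuousOn (fun z : ℝ ↦ 1 / (8 * (1 - z / 2) ^ 3)) (Icc 0 1) := by
    refine continuousOn_const.div (by fun_prop) fun z hz ↦ ?_
    have : 0 < 1 - z / 2 := by linarith [hz.2]
    positivity
  have hf'p : ContinuousOn (fun z : ℝ ↦ f' (u + z • w)) (Icc 0 1) :=
    hcont.comp (by fun_prop) hmaps
  rw [inner_boostedGradient ?_, hmid]
  · simp only [hpath]
    have h := sub_le_integral_of_boostingPotential (A := (1 - ν) * f x)
      (ψ := fun z ↦ 1 / (8 * (1 - z / 2) ^ 3) * ⟪f' (u + z • w), x - (u + (2 : ℝ) • w)⟫)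
      (fun z hz ↦ (hgrad _ (hmaps hz)).hasDerivWithinAt_add_smul hmaps)
      (hweight.mul (hf'p.inner continuousOn_const)).integrableOn_Icc
      fun z hz ↦ hf.le_inner_gradient_boostingPath hgrad hnonneg hu hxh hx hν0 hν1 huν hz
    simp only [one_smul, zero_smul, add_zero] at h
    linarith [hnonneg u hu]
  · simp only [hpath]
    exact (hweight.smul hf'p).intervalIntegrable_of_Icc zero_le_one

theorem DRSubmodularOn.boosting_consensus_le (hf : DRSubmodularOn d f)
    (hgrad : ∀ x ∈ cube d, HasGradientWithinAt f (f' x) (cube d) x)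
    (hcont : ContinuousOn f' (cube d)) (hnonneg : ∀ x ∈ cube d, 0 ≤ f x) {β : ℝ}
    (hlip : ∀ x ∈ cube d, ∀ y ∈ cube d, ‖f' x - f' y‖ ≤ β * ‖x - y‖) {u xi xj x : E}
    (hu : u ∈ cube d) (hxi : xi ∈ cube d) (hxj : xj ∈ cube d) (hx : x ∈ cube d) {ν : ℝ}
    (hν0 : 0 ≤ ν) (hν1 : ν ≤ 1) (huν : ∀ i, u i ≤ ν) :
    (1 - ν) / 4 * f x - f ((2 : ℝ)⁻¹ • (xi + u)) ≤
      ⟪boostedGradient f' u xj, x - xi⟫ +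
        ⟪(2 : ℝ)⁻¹ • f' ((2 : ℝ)⁻¹ • (xj + u)) - boostedGradient f' u xj, xj - xi⟫ +
        β / 8 * ‖xi - xj‖ ^ 2 := by
  have hmid : ∀ y ∈ cube d, (2 : ℝ)⁻¹ • (y + u) ∈ cube d := fun y hy ↦ by
    rw [smul_add]; exact convex_cube hy hu (by norm_num) (by norm_num) (by norm_num)
  have hboost := hf.sub_le_inner_boostedGradient hgrad hcont hnonneg hu hxj hx hν0 hν1 huν
  have hsmooth := convex_cube.add_inner_gradient_sub_le hgrad hlip (hmid xj hxj) (hmid xi hxi)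
  have hdiff : (2 : ℝ)⁻¹ • (xi + u) - (2 : ℝ)⁻¹ • (xj + u) = -((2 : ℝ)⁻¹ • (xj - xi)) := by
    module
  have hsplit : x - xj = (x - xi) - (xj - xi) := by abel
  rw [hdiff, norm_neg, norm_smul, inner_neg_right, real_inner_smul_right] at hsmooth
  rw [hsplit, inner_sub_right] at hboost
  rw [inner_sub_left, real_inner_smul_left, ← norm_neg (xi - xj), neg_sub]
  have hsq : β / 2 * (‖(2 : ℝ)⁻¹‖ * ‖xj - xi‖) ^ 2 = β / 8 * ‖xj - xi‖ ^ 2 := by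
    rw [norm_inv, Real.norm_ofNat]
    ring
  linarith

end Cube

theorem reduction_boosting_nonmonotone_smooth_general
    (d n T : ℕ)
    (K : Set (EuclideanSpace ℝ (Fin d))) (hKX : K ⊆ cube d)
    (u : EuclideanSpace ℝ (Fin d)) (hu : u ∈ K)
    (α ν : ℝ) (hν : ν = ⨆ i, |u i|) (hα : α = (1 - ν) / 4)
    (β : ℝ)
    (f : Fin T → Fin n → EuclideanSpace ℝ (Fin d) → ℝ)
    (f' : Fin T → Fin n → EuclideanSpace ℝ (Fin d) → EuclideanSpace ℝ (Fin d))
    (hsub : ∀ t j, DRSubmodularOn d (f t j))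
    (hnonneg : ∀ t j, ∀ x ∈ cube d, 0 ≤ f t j x)
    (hgrad : ∀ t j, ∀ x ∈ cube d, HasGradientWithinAt (f t j) (f' t j x) (cube d) x)
    (hcont : ∀ t j, ContinuousOn (f' t j) (cube d))
    (hlip : ∀ t j, ∀ x ∈ cube d, ∀ y ∈ cube d, ‖f' t j x - f' t j y‖ ≤ β * ‖x - y‖)
    (xhat : Fin T → Fin n → EuclideanSpace ℝ (Fin d))
    (hxhat : ∀ t j, xhat t j ∈ K)
    (xdec : Fin T → Fin n → EuclideanSpace ℝ (Fin d))
    (hxdec : ∀ t j, xdec t j = (2:ℝ)⁻¹ • (xhat t j + u))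
    (g : Fin T → Fin n → EuclideanSpace ℝ (Fin d) → EuclideanSpace ℝ (Fin d))
    (hg : ∀ t j, ∀ x ∈ K, g t j x =
      ∫ z in (0:ℝ)..1, (1 / (8 * (1 - z / 2) ^ 3)) • f' t j ((z / 2) • (x - u) + u)) :
    ∀ i : Fin n, ∀ x ∈ K,
      α * (∑ t, ∑ j, f t j x) - ∑ t, ∑ j, f t j (xdec t i) ≤
        (∑ t, ∑ j, (inner ℝ (g t j (xhat t j)) (x - xhat t i) : ℝ)) +
          (∑ t, ∑ j,
            (inner ℝ ((2:ℝ)⁻¹ • f' t j (xdec t j) - g t j (xhat t j))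
              (xhat t j - xhat t i) : ℝ)) +
          (β / 8) * ∑ t, ∑ j, ‖xhat t i - xhat t j‖ ^ 2 := by
  intro i x hx
  have hν0 : 0 ≤ ν := hν ▸ Real.iSup_nonneg fun _ ↦ abs_nonneg _
  have hν1 : ν ≤ 1 :=
    hν ▸ Real.iSup_le (fun k ↦ abs_le.2 ⟨by linarith [(hKX hu k).1], (hKX hu k).2⟩) zero_le_one
  have huν : ∀ k, u k ≤ ν := fun k ↦
    hν ▸ (le_abs_self _).trans (le_ciSup (Finite.bddAbove_range fun i ↦ |u i|) k)
  have hterm : ∀ t j, α * f t j x - f t j (xdec t i) ≤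
      ⟪g t j (xhat t j), x - xhat t i⟫ +
        ⟪(2 : ℝ)⁻¹ • f' t j (xdec t j) - g t j (xhat t j), xhat t j - xhat t i⟫ +
        β / 8 * ‖xhat t i - xhat t j‖ ^ 2 := fun t j ↦ by
    rw [hα, hxdec, hxdec, hg t j _ (hxhat t j)]
    exact (hsub t j).boosting_consensus_le (hgrad t j) (hcont t j) (hnonneg t j) (hlip t j)
      (hKX hu) (hKX (hxhat t i)) (hKX (hxhat t j)) (hKX hx) hν0 hν1 huν
  calc α * (∑ t, ∑ j, f t j x) - ∑ t, ∑ j, f t j (xdec t i)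
      = ∑ t, ∑ j, (α * f t j x - f t j (xdec t i)) := by
        simp only [Finset.mul_sum, ← Finset.sum_sub_distrib]
    _ ≤ _ := Finset.sum_le_sum fun t _ ↦ Finset.sum_le_sum fun j _ ↦ hterm t j
    _ = _ := by simp only [Finset.sum_add_distrib, ← Finset.mul_sum]

/-- deterministic core of Theorem 2: the smooth-case version of the
reduction based on the boosting technique, with a squared-consensus-error term. -/
theorem reduction_boosting_nonmonotone_smooth
    (d n T : ℕ) (hd : 1 ≤ d) (hn : 1 ≤ n) (hT : 1 ≤ T)
    (K : Set (EuclideanSpace ℝ (Fin d))) (hKcvx : Convex ℝ K) (hKX : K ⊆ cube d)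
    (u : EuclideanSpace ℝ (Fin d)) (hu : u ∈ K)
    (α ν : ℝ) (hν : ν = ⨆ i, |u i|) (hα : α = (1 - ν) / 4)
    (β : ℝ)
    (f : Fin T → Fin n → EuclideanSpace ℝ (Fin d) → ℝ)
    (f' : Fin T → Fin n → EuclideanSpace ℝ (Fin d) → EuclideanSpace ℝ (Fin d))
    (hsub : ∀ t j, DRSubmodularOn d (f t j))
    (hnonneg : ∀ t j, ∀ x ∈ cube d, 0 ≤ f t j x)
    (hgrad : ∀ t j, ∀ x ∈ cube d, HasGradientWithinAt (f t j) (f' t j x) (cube d) x)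
    (hcont : ∀ t j, ContinuousOn (f' t j) (cube d))
    (hlip : ∀ t j, ∀ x ∈ cube d, ∀ y ∈ cube d, ‖f' t j x - f' t j y‖ ≤ β * ‖x - y‖)
    (xhat : Fin T → Fin n → EuclideanSpace ℝ (Fin d))
    (hxhat : ∀ t j, xhat t j ∈ K)
    (xdec : Fin T → Fin n → EuclideanSpace ℝ (Fin d))
    (hxdec : ∀ t j, xdec t j = (2:ℝ)⁻¹ • (xhat t j + u))
    (g : Fin T → Fin n → EuclideanSpace ℝ (Fin d) → EuclideanSpace ℝ (Fin d))
    (hg : ∀ t j, ∀ x ∈ K, g t j x =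
      ∫ z in (0:ℝ)..1, (1 / (8 * (1 - z / 2) ^ 3)) • f' t j ((z / 2) • (x - u) + u)) :
    ∀ i : Fin n, ∀ x ∈ K,
      α * (∑ t, ∑ j, f t j x) - ∑ t, ∑ j, f t j (xdec t i) ≤
        (∑ t, ∑ j, (inner ℝ (g t j (xhat t j)) (x - xhat t i) : ℝ)) +
          (∑ t, ∑ j,
            (inner ℝ ((2:ℝ)⁻¹ • f' t j (xdec t j) - g t j (xhat t j))
              (xhat t j - xhat t i) : ℝ)) +
          (β / 8) * ∑ t, ∑ j, ‖xhat t i - xhat t j‖ ^ 2 :=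
  reduction_boosting_nonmonotone_smooth_general d n T K hKX u hu α ν hν hα β f f' hsub hnonneg hgrad
    hcont hlip xhat hxhat xdec hxdec g hg
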